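/- arXiv:1206.3426 — 2 statements merged into one kernel-verified Lean document; each statement's English description precedes it below -/
import Mathlib

section
/- Let f : [0,∞) → R satisfy: f ∈ C^1([0,∞)) ∩ C^3((σ,∞)), f' = 0 on [0,σ], f'' > 0 on (σ,∞), with σ > 0. Let a(s) = f'(s)/(s f''(s)) for s > σ. If there exists σ̃ > σ such that a is nondecreasing on (σ, σ̃), then lim_{s → σ⁺} a(s) = 0. -/
/-!
Write `g = f'`, so that `a = g / (s g')`. A monotone positive `a` tends to its infimum `L ≥ 0`
as `s → σ⁺`. If `L > 0`, then `s g' ≤ g / L` near `σ`, i.e. `log g - (1/L) log s` is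
antitone there; hence `g(s) ≥ g(t) (s/t)^(1/L) ≥ g(t) (σ/t)^(1/L) > 0` for `σ < s < t`,
which contradicts `g(s) → f'(σ) = 0`.
-/

open Set Filter Topology

lemma antitoneOn_log_sub_mul_log_of_mul_deriv_le {g g' : ℝ → ℝ} {a b α : ℝ} (ha : 0 ≤ a)
    (hpos : ∀ s ∈ Ioo a b, 0 < g s) (hderiv : ∀ s ∈ Ioo a b, HasDerivAt g (g' s) s)
    (hle : ∀ s ∈ Ioo a b, s * g' s ≤ α * g s) :
    AntitoneOn (fun s => Real.log (g s) - α * Real.log s) (Ioo a b) := by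
  have hasDeriv : ∀ s ∈ Ioo a b, HasDerivAt (fun s => Real.log (g s) - α * Real.log s)
      (g' s / g s - α * s⁻¹) s := fun s hs =>
    ((hderiv s hs).log (hpos s hs).ne').sub
      ((Real.hasDerivAt_log (ha.trans_lt hs.1).ne').const_mul α)
  refine antitoneOn_of_hasDerivWithinAt_nonpos (f' := fun s => g' s / g s - α * s⁻¹) (convex_Ioo a b)
    (fun s hs => (hasDeriv s hs).continuousAt.continuousWithinAt) (fun s hs => ?_) (fun s hs => ?_)
  · rw [interior_Ioo] at hs
    exact (hasDeriv s hs).hasDerivWithinAt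
  · rw [interior_Ioo] at hs
    have hs₀ : 0 < s := ha.trans_lt hs.1
    rw [sub_nonpos, div_le_iff₀ (hpos s hs), mul_right_comm, ← div_eq_mul_inv,
      le_div_iff₀ hs₀, mul_comm]
    exact hle s hs

lemma not_tendsto_nhdsGT_zero_of_mul_deriv_le {g g' : ℝ → ℝ} {a b α : ℝ} (ha : 0 < a)
    (hab : a < b) (hα : 0 ≤ α) (hpos : ∀ s ∈ Ioo a b, 0 < g s)
    (hderiv : ∀ s ∈ Ioo a b, HasDerivAt g (g' s) s) (hle : ∀ s ∈ Ioo a b, s * g' s ≤ α * g s) :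
    ¬ Tendsto g (𝓝[>] a) (𝓝 0) := by
  intro hg
  obtain ⟨t, ht⟩ := nonempty_Ioo.2 hab
  have hanti := antitoneOn_log_sub_mul_log_of_mul_deriv_le ha.le hpos hderiv hle
  set c := Real.exp (Real.log (g t) - α * Real.log t + α * Real.log a)
  have hlower : ∀ s ∈ Ioo a t, c ≤ g s := by
    intro s hs
    have hs' : s ∈ Ioo a b := ⟨hs.1, hs.2.trans ht.2⟩
    have hlog : α * Real.log a ≤ α * Real.log s :=
      mul_le_mul_of_nonneg_left (Real.log_le_log ha hs.1.le) hα
    have := hanti hs' ht hs.2.le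
    rw [← Real.exp_log (hpos s hs')]
    exact Real.exp_le_exp.2 (by simp only at this; linarith)
  have hsmall : ∀ᶠ s in 𝓝[>] a, g s < c := hg.eventually (eventually_lt_nhds (Real.exp_pos _))
  obtain ⟨s, hsc, hs⟩ := (hsmall.and (Ioo_mem_nhdsGT ht.1)).exists
  exact (hlower s hs).not_gt hsc

lemma pos_of_strictMonoOn_of_tendsto_nhdsGT_zero {g : ℝ → ℝ} {a b : ℝ}
    (hg : Tendsto g (𝓝[>] a) (𝓝 0)) (hmono : StrictMonoOn g (Ioo a b)) :
    ∀ s ∈ Ioo a b, 0 < g s := by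
  intro s hs
  obtain ⟨u, hau, hus⟩ := exists_between hs.1
  have hu : u ∈ Ioo a b := ⟨hau, hus.trans hs.2⟩
  have hu_nonneg : 0 ≤ g u := by
    refine le_of_tendsto hg ?_
    filter_upwards [Ioo_mem_nhdsGT hu.1] with r hr
    exact hmono.monotoneOn ⟨hr.1, hr.2.trans hu.2⟩ hu hr.2.le
  exact hu_nonneg.trans_lt (hmono hu hs hus)

theorem tendsto_div_mul_deriv_nhdsGT_zero {g g' : ℝ → ℝ} {a b : ℝ} (ha : 0 < a) (hab : a < b)
    (hg : Tendsto g (𝓝[>] a) (𝓝 0)) (hderiv : ∀ s ∈ Ioo a b, HasDerivAt g (g' s) s)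
    (hg' : ∀ s ∈ Ioo a b, 0 < g' s) (hmono : MonotoneOn (fun s => g s / (s * g' s)) (Ioo a b)) :
    Tendsto (fun s => g s / (s * g' s)) (𝓝[>] a) (𝓝 0) := by
  have hstrict : StrictMonoOn g (Ioo a b) :=
    strictMonoOn_of_hasDerivWithinAt_pos (convex_Ioo a b)
      (fun s hs => (hderiv s hs).continuousAt.continuousWithinAt)
      (fun s hs => by rw [interior_Ioo] at hs ⊢; exact (hderiv s hs).hasDerivWithinAt)
      (fun s hs => by rw [interior_Ioo] at hs; exact hg' s hs)
  have hpos := pos_of_strictMonoOn_of_tendsto_nhdsGT_zero hg hstrict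
  have hratio_pos : ∀ s ∈ Ioo a b, 0 < g s / (s * g' s) := fun s hs =>
    div_pos (hpos s hs) (mul_pos (ha.trans hs.1) (hg' s hs))
  set L := sInf ((fun s => g s / (s * g' s)) '' Ioo a b)
  have hbdd : BddBelow ((fun s => g s / (s * g' s)) '' Ioo a b) :=
    ⟨0, forall_mem_image.2 fun s hs => (hratio_pos s hs).le⟩
  have hlim : Tendsto (fun s => g s / (s * g' s)) (𝓝[>] a) (𝓝 L) :=
    hmono.tendsto_nhdsWithin_Ioo_right (nonempty_Ioo.2 hab) hbdd
  have hL_nonneg : 0 ≤ L :=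
    le_csInf ((nonempty_Ioo.2 hab).image _) (forall_mem_image.2 fun s hs => (hratio_pos s hs).le)
  obtain hL | hL := hL_nonneg.eq_or_lt
  · rwa [← hL] at hlim
  refine absurd hg (not_tendsto_nhdsGT_zero_of_mul_deriv_le ha hab (inv_nonneg.2 hL.le) hpos
    hderiv fun s hs => ?_)
  have hLs : L ≤ g s / (s * g' s) := csInf_le hbdd (mem_image_of_mem _ hs)
  rw [le_div_iff₀ (mul_pos (ha.trans hs.1) (hg' s hs))] at hLs
  rw [inv_mul_eq_div, le_div_iff₀ hL]
  linarith

/-- If `a(s) = f'(s)/(s f''(s))` is nondecreasing on `(σ, σ̃)` then `a(s) → 0` as `s → σ⁺`. -/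
theorem stmt_6 (f : ℝ → ℝ) (σ σ' : ℝ) (hσ : 0 < σ) (hσ' : σ < σ')
    (hC1 : ContDiffOn ℝ 1 f (Ici 0)) (hC3 : ContDiffOn ℝ 3 f (Ioi σ))
    (hf' : ∀ s ∈ Icc 0 σ, deriv f s = 0)
    (hf'' : ∀ s > σ, 0 < iteratedDeriv 2 f s)
    (hmono : MonotoneOn (fun s => deriv f s / (s * iteratedDeriv 2 f s)) (Ioo σ σ')) :
    Tendsto (fun s => deriv f s / (s * iteratedDeriv 2 f s))
      (nhdsWithin σ (Ioi σ)) (nhds 0) := by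
  have hcont : ContinuousOn (deriv f) (Ioi 0) :=
    (hC1.mono Ioi_subset_Ici_self).continuousOn_deriv_of_isOpen isOpen_Ioi le_rfl
  have hlim : Tendsto (deriv f) (𝓝[>] σ) (𝓝 0) := by
    simpa [hf' σ ⟨hσ.le, le_rfl⟩] using
      ((hcont σ hσ).mono (Ioi_subset_Ioi hσ.le)).tendsto
  have hderiv : ∀ s ∈ Ioo σ σ', HasDerivAt (deriv f) (iteratedDeriv 2 f s) s := by
    intro s hs
    rw [iteratedDeriv_succ', iteratedDeriv_one]
    exact (((hC3.deriv_of_isOpen isOpen_Ioi (by norm_num : (2 : WithTop ℕ∞) + 1 ≤ 3))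
      |>.differentiableOn (by norm_num)).differentiableAt (isOpen_Ioi.mem_nhds hs.1)).hasDerivAt
  exact tendsto_div_mul_deriv_nhdsGT_zero hσ hσ' hlim hderiv (fun s hs => hf'' s hs.1) hmono
end

section
/- Let g : [0,∞) → R be convex differentiable with g' continuous, nondecreasing, nonnegative, and let ψ(t) = ∫₀ᵗ g'((ρ/(N−1))(e^{(N−1)(R−s)/ρ} − 1)) ds with ρ > 0, N ≥ 2, R > 0. Writing f = g* (so f' = (g')^{-1} in the appropriate sense) and assuming f ∈ C^3 with f'' > 0 where defined, the function ψ satisfies the ODE ψ''(t) f''(ψ'(t)) + ((N−1)/ρ) f'(ψ'(t)) + 1 = 0 for t ∈ (0, R) whenever ψ'(t) > σ. -/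
/-!
With `c = N - 1`, the function `u(t) = (ρ/c)(e^{c(R-t)/ρ} - 1)` solves the linear ODE
`u' = -((c/ρ) u + 1)` and is positive on `(-∞, R)`. There `ψ' = g' ∘ u`, hence `f' ∘ ψ' = u`, and
differentiating this identity by the chain rule gives `ψ'' f''(ψ') = u' = -((c/ρ) f'(ψ') + 1)`.
-/

open Set Filter Topology

noncomputable def exponentialProfile (c ρ R s : ℝ) : ℝ :=
  ρ / c * (Real.exp (c * (R - s) / ρ) - 1)

section exponentialProfile

variable {c ρ R : ℝ}

theorem continuous_exponentialProfile : Continuous (exponentialProfile c ρ R) := by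
  unfold exponentialProfile
  fun_prop

theorem exponentialProfile_pos (hc : 0 < c) (hρ : 0 < ρ) {s : ℝ} (hs : s < R) :
    0 < exponentialProfile c ρ R s := by
  have hexp : 1 < Real.exp (c * (R - s) / ρ) :=
    Real.one_lt_exp_iff.mpr (div_pos (mul_pos hc (sub_pos.mpr hs)) hρ)
  exact mul_pos (div_pos hρ hc) (sub_pos.mpr hexp)

theorem hasDerivAt_exponentialProfile (hc : c ≠ 0) (hρ : ρ ≠ 0) (s : ℝ) :
    HasDerivAt (exponentialProfile c ρ R) (-(c / ρ * exponentialProfile c ρ R s + 1)) s := by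
  have hexp : HasDerivAt (fun x => Real.exp (c * (R - x) / ρ))
      (Real.exp (c * (R - s) / ρ) * (c * (-1) / ρ)) s :=
    ((((hasDerivAt_id s).const_sub R).const_mul c).div_const ρ).exp
  refine ((hexp.sub_const 1).const_mul (ρ / c)).congr_deriv ?_
  simp only [exponentialProfile]
  field_simp
  ring

end exponentialProfile

theorem hasDerivAt_integral_of_continuousOn {E : Type*} [NormedAddCommGroup E] [NormedSpace ℝ E]
    [CompleteSpace E] {h : ℝ → E} {U : Set ℝ} (hU : IsOpen U)
    (hh : ContinuousOn h U) {a s : ℝ} (has : uIcc a s ⊆ U) :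
    HasDerivAt (fun x => ∫ y in a..x, h y) (h s) s :=
  have hs : s ∈ U := has right_mem_uIcc
  intervalIntegral.integral_hasDerivAt_right ((hh.mono has).intervalIntegrable)
    (hh.stronglyMeasurableAtFilter hU s hs) (hh.continuousAt (hU.mem_nhds hs))

theorem deriv_integral_eventuallyEq_of_continuousOn {E : Type*} [NormedAddCommGroup E]
    [NormedSpace ℝ E] [CompleteSpace E] {h : ℝ → E} {a b t : ℝ}
    (hh : ContinuousOn h (Iio b)) (ht : t ∈ Ioo a b) :
    deriv (fun x => ∫ y in a..x, h y) =ᶠ[𝓝 t] h :=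
  eventually_of_mem (isOpen_Ioo.mem_nhds ht) fun _ hs =>
    (hasDerivAt_integral_of_continuousOn isOpen_Iio hh fun _ hy =>
      ((uIcc_of_le hs.1.le ▸ hy).2).trans_lt hs.2).deriv

theorem HasDerivAt.mul_eq_of_comp_eventuallyEq {φ F u : ℝ → ℝ} {t φ' F' u' : ℝ}
    (hφ : HasDerivAt φ φ' t) (hF : HasDerivAt F F' (φ t)) (hu : HasDerivAt u u' t)
    (hFφ : F ∘ φ =ᶠ[𝓝 t] u) : φ' * F' = u' := by
  rw [mul_comm]
  exact ((hF.comp t hφ).congr_of_eventuallyEq hFφ.symm).unique hu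

theorem stmt_11_general (f g' : ℝ → ℝ) (σ ρ R : ℝ) (N : ℕ)
    (hN : 2 ≤ N) (hρ : 0 < ρ)
    (hC3 : ContDiffOn ℝ 3 f (Ioi σ))
    (hg'cont : ContinuousOn g' (Ici 0)) (hg'diff : DifferentiableOn ℝ g' (Ioi 0))
    (hinv₁ : ∀ t > (0:ℝ), deriv f (g' t) = t)
    (ψ : ℝ → ℝ)
    (hψ : ∀ t, ψ t = ∫ s in (0:ℝ)..t,
      g' ((ρ/((N:ℝ)-1)) * (Real.exp (((N:ℝ)-1)*(R-s)/ρ) - 1))) :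
    ∀ t ∈ Ioo (0:ℝ) R, σ < deriv ψ t →
      deriv (deriv ψ) t * iteratedDeriv 2 f (deriv ψ t) +
        (((N:ℝ)-1)/ρ) * deriv f (deriv ψ t) + 1 = 0 := by
  intro t ht hσt
  have hc : (0:ℝ) < (N:ℝ) - 1 := by
    have : (2:ℝ) ≤ N := by exact_mod_cast hN
    linarith
  set u := exponentialProfile ((N:ℝ) - 1) ρ R
  have hu_pos : ∀ s < R, 0 < u s := fun s hs => exponentialProfile_pos hc hρ hs
  have hu' : ∀ s, HasDerivAt u (-(((N:ℝ) - 1) / ρ * u s + 1)) s :=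
    hasDerivAt_exponentialProfile hc.ne' hρ.ne'
  have hψ'_eq : deriv ψ =ᶠ[𝓝 t] g' ∘ u := by
    rw [show ψ = fun x => ∫ y in (0:ℝ)..x, (g' ∘ u) y from funext hψ]
    refine deriv_integral_eventuallyEq_of_continuousOn (fun s hs => ?_) ht
    exact ((hg'cont.continuousAt (Ici_mem_nhds (hu_pos s hs))).comp
      continuous_exponentialProfile.continuousAt).continuousWithinAt
  have hψ'' : HasDerivAt (deriv ψ) (deriv (deriv ψ) t) t :=
    (((hg'diff.differentiableAt (Ioi_mem_nhds (hu_pos t ht.2))).comp t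
      (hu' t).differentiableAt).congr_of_eventuallyEq hψ'_eq).hasDerivAt
  have hf'' : HasDerivAt (deriv f) (iteratedDeriv 2 f (deriv ψ t)) (deriv ψ t) := by
    rw [iteratedDeriv_succ, iteratedDeriv_one]
    have hf' : ContDiffOn ℝ 1 (deriv f) (Ioi σ) := hC3.deriv_of_isOpen isOpen_Ioi (by norm_num)
    exact ((hf'.differentiableOn one_ne_zero).differentiableAt (Ioi_mem_nhds hσt)).hasDerivAt
  have hf'ψ' : deriv f ∘ deriv ψ =ᶠ[𝓝 t] u :=
    hψ'_eq.fun_comp (deriv f) |>.trans <| eventually_of_mem (Iio_mem_nhds ht.2)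
      fun s hs => hinv₁ _ (hu_pos s hs)
  have hODE := hψ''.mul_eq_of_comp_eventuallyEq hf'' (hu' t) hf'ψ'
  have hf'_val : deriv f (deriv ψ t) = u t := hf'ψ'.eq_of_nhds
  rw [hf'_val]
  linarith

/-- The barrier `ψ` satisfies the ODE `ψ'' f''(ψ') + ((N−1)/ρ) f'(ψ') + 1 = 0`
wherever `ψ' > σ`. -/
theorem stmt_11 (f g' : ℝ → ℝ) (σ ρ R : ℝ) (N : ℕ)
    (hN : 2 ≤ N) (hρ : 0 < ρ) (hR : 0 < R) (hσ : 0 < σ)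
    (hC1 : ContDiffOn ℝ 1 f (Ici 0)) (hC3 : ContDiffOn ℝ 3 f (Ioi σ))
    (hf'' : ∀ s > σ, 0 < iteratedDeriv 2 f s)
    (hf'0 : ∀ s ∈ Icc 0 σ, deriv f s = 0)
    (hg'cont : ContinuousOn g' (Ici 0)) (hg'diff : DifferentiableOn ℝ g' (Ioi 0))
    (hinv₁ : ∀ t > (0:ℝ), deriv f (g' t) = t)
    (hinv₂ : ∀ s > σ, g' (deriv f s) = s)
    (ψ : ℝ → ℝ)
    (hψ : ∀ t, ψ t = ∫ s in (0:ℝ)..t,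
      g' ((ρ/((N:ℝ)-1)) * (Real.exp (((N:ℝ)-1)*(R-s)/ρ) - 1))) :
    ∀ t ∈ Ioo (0:ℝ) R, σ < deriv ψ t →
      deriv (deriv ψ) t * iteratedDeriv 2 f (deriv ψ t) +
        (((N:ℝ)-1)/ρ) * deriv f (deriv ψ t) + 1 = 0 :=
  stmt_11_general f g' σ ρ R N hN hρ hC3 hg'cont hg'diff hinv₁ ψ hψ
end
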